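/- arXiv:2308.14314 — 2 statements merged into one kernel-verified Lean document; each statement's English description precedes it below -/
import Mathlib

section
/- The NSA iterates satisfy liminf_{k→∞} k³·(log k)·(log log k)·‖∇f(y_k)‖² = 0. -/
/-!
With `α k = p / (k + p)`, the energy
`V k = (1 - α k) / α k ^ 2 * (f (x k) - f x⋆) + ‖z k - x⋆‖ ^ 2 / (2 η)`
is a Lyapunov function: convexity of `f` at `y k`, the descent lemma for the gradient step from
`y k`, and the identity `α (z - x⋆) = (1 - α) (y - x) + α (y - x⋆)` give
`V (k + 1) + η / (6 α k ^ 2) ‖∇f (y k)‖ ^ 2 ≤ V k`, hence `∑ k ^ 2 ‖∇f (y k)‖ ^ 2 < ∞`.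
On the other hand `∑ 1 / (k log k log log k)` diverges, since its terms dominate the increments
of `log log log k`; so a summable nonnegative sequence cannot stay above
`ε / (k log k log log k)` from some point on.
-/

open Filter Set Real
open scoped RealInnerProductSpace

theorem summable_of_succ_add_le {V c : ℕ → ℝ} (hV : ∀ k, 0 ≤ V k) (hc : ∀ k, 0 ≤ c k)
    (h : ∀ k, V (k + 1) + c k ≤ V k) : Summable c := by
  refine summable_of_sum_range_le (c := V 0) hc fun N => ?_
  have hpartial : V N + ∑ k ∈ Finset.range N, c k ≤ V 0 := by
    induction N with
    | zero => simp
    | succ N ih => rw [Finset.sum_range_succ]; linarith [h N]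
  linarith [hV N]

section Smooth

variable {E : Type*} [NormedAddCommGroup E] [InnerProductSpace ℝ E] [CompleteSpace E] {f : E → ℝ}

theorem hasDerivAt_comp_add_smul (hf : Differentiable ℝ f) (a u : E) (t : ℝ) :
    HasDerivAt (fun s : ℝ => f (a + s • u)) ⟪gradient f (a + t • u), u⟫ t := by
  have hline : HasDerivAt (fun s : ℝ => a + s • u) u t := by
    simpa using ((hasDerivAt_id t).smul_const u).const_add a
  exact (hf _).hasGradientAt.hasFDerivAt.comp_hasDerivAt t hline

theorem ConvexOn.sub_le_inner_gradient (hconv : ConvexOn ℝ univ f) (hf : Differentiable ℝ f)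
    (a b : E) : f a - f b ≤ ⟪gradient f a, a - b⟫ := by
  have hline : ConvexOn ℝ univ (fun s : ℝ => f (a + s • (b - a))) := by
    have heq : (fun s : ℝ => f (a + s • (b - a))) = f ∘ AffineMap.lineMap a b := by
      ext s
      simp [AffineMap.lineMap_apply, add_comm]
    simpa [heq] using hconv.comp_affineMap (AffineMap.lineMap a b)
  have := hline.le_slope_of_hasDerivAt (mem_univ 0) (mem_univ 1) zero_lt_one
    (by simpa only [zero_smul, add_zero] using hasDerivAt_comp_add_smul hf a (b - a) 0)
  rw [slope_def_field, ← neg_sub a b, inner_neg_right] at this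
  simp only [one_smul, zero_smul, add_zero, neg_sub, add_sub_cancel, sub_zero, div_one] at this
  linarith

theorem le_add_inner_gradient_add_sq (hf : Differentiable ℝ f) {L : ℝ}
    (hlip : ∀ x x' : E, ‖gradient f x - gradient f x'‖ ≤ L * ‖x - x'‖) (a b : E) :
    f b ≤ f a + ⟪gradient f a, b - a⟫ + L / 2 * ‖b - a‖ ^ 2 := by
  set u := b - a
  set ψ : ℝ → ℝ := fun t => f (a + t • u) - t * ⟪gradient f a, u⟫ - L / 2 * ‖u‖ ^ 2 * t ^ 2
  have hψ : ∀ t : ℝ, HasDerivAt ψ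
      (⟪gradient f (a + t • u) - gradient f a, u⟫ - L * ‖u‖ ^ 2 * t) t := by
    intro t
    have hquad : HasDerivAt (fun t : ℝ => L / 2 * ‖u‖ ^ 2 * t ^ 2) (L * ‖u‖ ^ 2 * t) t := by
      refine ((hasDerivAt_pow 2 t).const_mul (L / 2 * ‖u‖ ^ 2)).congr_deriv ?_
      push_cast
      ring
    refine (((hasDerivAt_comp_add_smul hf a u t).sub
      ((hasDerivAt_id t).mul_const ⟪gradient f a, u⟫)).sub hquad).congr_deriv ?_
    rw [inner_sub_left, one_mul]
  have hanti : AntitoneOn ψ (Icc 0 1) := by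
    refine antitoneOn_of_deriv_nonpos (convex_Icc 0 1)
      (fun t _ => (hψ t).continuousAt.continuousWithinAt)
      (fun t _ => (hψ t).differentiableAt.differentiableWithinAt) fun t ht => ?_
    rw [interior_Icc] at ht
    rw [(hψ t).deriv, sub_nonpos]
    calc ⟪gradient f (a + t • u) - gradient f a, u⟫
        ≤ ‖gradient f (a + t • u) - gradient f a‖ * ‖u‖ := real_inner_le_norm _ _
      _ ≤ L * ‖(a + t • u) - a‖ * ‖u‖ := by gcongr; exact hlip _ _
      _ = L * ‖u‖ ^ 2 * t := by
        rw [add_sub_cancel_left, norm_smul, norm_of_nonneg ht.1.le]; ring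
  have h01 := hanti (left_mem_Icc.2 zero_le_one) (right_mem_Icc.2 zero_le_one) zero_le_one
  simp only [ψ, zero_smul, add_zero, one_smul, zero_mul, sub_zero, one_mul, one_pow, mul_one,
    ne_eq, OfNat.ofNat_ne_zero, not_false_eq_true, zero_pow, mul_zero, u, add_sub_cancel] at h01
  linarith

theorem gradient_step_le (hf : Differentiable ℝ f) {L : ℝ}
    (hlip : ∀ x x' : E, ‖gradient f x - gradient f x'‖ ≤ L * ‖x - x'‖) (a : E) (η : ℝ) :
    f (a - η • gradient f a) ≤ f a - η * (1 - L * η / 2) * ‖gradient f a‖ ^ 2 := by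
  have := le_add_inner_gradient_add_sq hf hlip a (a - η • gradient f a)
  rw [sub_sub_cancel_left, inner_neg_right, real_inner_smul_right, real_inner_self_eq_norm_sq,
    norm_neg, norm_smul, mul_pow, norm_eq_abs, sq_abs] at this
  linarith

theorem nsa_energy_step (hconv : ConvexOn ℝ univ f) (hf : Differentiable ℝ f) {L : ℝ}
    (hlip : ∀ x x' : E, ‖gradient f x - gradient f x'‖ ≤ L * ‖x - x'‖)
    {η α : ℝ} (hη : 0 < η) (hLη : L * η ≤ 2 / 3) (hα0 : 0 < α) (hα1 : α ≤ 1)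
    {x y z x' z' xstar : E} (hy : y = (1 - α) • x + α • z)
    (hx' : f x' ≤ f (y - η • gradient f y)) (hz' : z' = z - (η / α) • gradient f y) :
    (f x' - f xstar) / α ^ 2 + ‖z' - xstar‖ ^ 2 / (2 * η) + η / (6 * α ^ 2) * ‖gradient f y‖ ^ 2 ≤
      (1 - α) / α ^ 2 * (f x - f xstar) + ‖z - xstar‖ ^ 2 / (2 * η) := by
  have hdescent : f x' ≤ f y - 2 * η / 3 * ‖gradient f y‖ ^ 2 := by
    have := gradient_step_le hf hlip y η
    nlinarith [mul_nonneg (mul_nonneg hη.le (sub_nonneg.2 hLη)) (sq_nonneg ‖gradient f y‖)]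
  set v := gradient f y
  have hz_sq : ‖z' - xstar‖ ^ 2 =
      ‖z - xstar‖ ^ 2 - 2 * (η / α) * ⟪v, z - xstar⟫ + (η / α) ^ 2 * ‖v‖ ^ 2 := by
    rw [hz', sub_right_comm, norm_sub_sq_real, real_inner_smul_right, norm_smul, mul_pow,
      norm_eq_abs, sq_abs, real_inner_comm]
    ring
  have hsplit : α * ⟪v, z - xstar⟫ = (1 - α) * ⟪v, y - x⟫ + α * ⟪v, y - xstar⟫ := by
    rw [← real_inner_smul_right, ← real_inner_smul_right, ← real_inner_smul_right,
      ← inner_add_right, hy]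
    congr 1
    module
  -- the inequality multiplied by `α²`, where the `f y` terms cancel
  have hscaled : (f x' - f xstar) + α ^ 2 * ‖z' - xstar‖ ^ 2 / (2 * η) + η / 6 * ‖v‖ ^ 2 ≤
      (1 - α) * (f x - f xstar) + α ^ 2 * ‖z - xstar‖ ^ 2 / (2 * η) := by
    have hz_scaled : α ^ 2 * ‖z' - xstar‖ ^ 2 / (2 * η) = α ^ 2 * ‖z - xstar‖ ^ 2 / (2 * η) -
        α * ⟪v, z - xstar⟫ + η / 2 * ‖v‖ ^ 2 := by
      rw [hz_sq]
      field_simp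
    linarith [mul_le_mul_of_nonneg_left (hconv.sub_le_inner_gradient hf y x) (sub_nonneg.2 hα1),
      mul_le_mul_of_nonneg_left (hconv.sub_le_inner_gradient hf y xstar) hα0.le]
  calc (f x' - f xstar) / α ^ 2 + ‖z' - xstar‖ ^ 2 / (2 * η) + η / (6 * α ^ 2) * ‖v‖ ^ 2
      = ((f x' - f xstar) + α ^ 2 * ‖z' - xstar‖ ^ 2 / (2 * η) + η / 6 * ‖v‖ ^ 2) / α ^ 2 := by
        field_simp
    _ ≤ ((1 - α) * (f x - f xstar) + α ^ 2 * ‖z - xstar‖ ^ 2 / (2 * η)) / α ^ 2 := by gcongr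
    _ = (1 - α) / α ^ 2 * (f x - f xstar) + ‖z - xstar‖ ^ 2 / (2 * η) := by field_simp

theorem nsa_summable_sq_mul_norm_gradient_sq (hconv : ConvexOn ℝ univ f)
    (hf : Differentiable ℝ f) {L : ℝ}
    (hlip : ∀ x x' : E, ‖gradient f x - gradient f x'‖ ≤ L * ‖x - x'‖)
    {xstar : E} (hmin : ∀ u, f xstar ≤ f u) {p η : ℝ} (hp : 2 ≤ p) (hη : 0 < η)
    (hLη : L * η ≤ 2 / 3) {α : ℕ → ℝ} (hα : ∀ k : ℕ, α k = p / (k + p))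
    {x y z : ℕ → E} (hy : ∀ k, y k = (1 - α k) • x k + α k • z k)
    (hx : ∀ k, f (x (k + 1)) ≤ f (y k - η • gradient f (y k)))
    (hz : ∀ k, z (k + 1) = z k - (η / α k) • gradient f (y k)) :
    Summable fun k : ℕ => (k : ℝ) ^ 2 * ‖gradient f (y k)‖ ^ 2 := by
  have hp0 : 0 < p := by linarith
  have hα0 : ∀ k, 0 < α k := fun k => by rw [hα]; positivity
  have hα1 : ∀ k, α k ≤ 1 := fun k => by
    rw [hα, div_le_one (by positivity)]; linarith [k.cast_nonneg (α := ℝ)]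
  set V : ℕ → ℝ := fun k => (1 - α k) / α k ^ 2 * (f (x k) - f xstar) + ‖z k - xstar‖ ^ 2 / (2 * η)
  set c : ℕ → ℝ := fun k => η / (6 * α k ^ 2) * ‖gradient f (y k)‖ ^ 2
  -- `(1 - α (k+1)) / α (k+1)² = (k+1)(k+1+p)/p² ≤ (k+p)²/p² = 1 / α k²`
  have hweight : ∀ k, (1 - α (k + 1)) / α (k + 1) ^ 2 ≤ 1 / α k ^ 2 := fun k => by
    rw [hα, hα, div_le_div_iff₀ (by positivity) (by positivity)]
    push_cast
    field_simp
    nlinarith [k.cast_nonneg (α := ℝ)]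
  have hV : ∀ k, V (k + 1) + c k ≤ V k := fun k => by
    have hstep := nsa_energy_step (xstar := xstar) hconv hf hlip hη hLη (hα0 k) (hα1 k) (hy k)
      (hx k) (hz k)
    have := mul_le_mul_of_nonneg_right (hweight k) (sub_nonneg.2 (hmin (x (k + 1))))
    simp only [V, c]
    linarith [one_div_mul_eq_div (α k ^ 2) (f (x (k + 1)) - f xstar)]
  have hV0 : ∀ k, 0 ≤ V k := fun k =>
    add_nonneg (mul_nonneg (div_nonneg (sub_nonneg.2 (hα1 k)) (sq_nonneg _))
      (sub_nonneg.2 (hmin _))) (by positivity)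
  have hsum : Summable c := summable_of_succ_add_le hV0 (fun k => by positivity) hV
  refine (hsum.mul_left (6 * p ^ 2 / η)).of_nonneg_of_le (fun k => by positivity) fun k => ?_
  simp only [c, hα]
  field_simp
  rw [mul_comm]
  gcongr
  linarith

end Smooth

theorem one_lt_log_of_three_le {x : ℝ} (hx : 3 ≤ x) : 1 < log x := by
  rw [lt_log_iff_exp_lt (by linarith)]
  linarith [exp_one_lt_d9]

theorem log_sub_log_le_div {x y d : ℝ} (hx : 0 < x) (hy : 0 < y) (h : y - x ≤ d) :
    log y - log x ≤ d / x := by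
  rw [← log_div hy.ne' hx.ne']
  calc log (y / x) ≤ y / x - 1 := log_le_sub_one_of_pos (by positivity)
    _ = (y - x) / x := by field_simp
    _ ≤ d / x := by gcongr

theorem log_log_log_succ_sub_le {x : ℝ} (hx : 3 ≤ x) :
    log (log (log (x + 1))) - log (log (log x)) ≤ 1 / (x * log x * log (log x)) := by
  have hlog : 1 < log x := one_lt_log_of_three_le hx
  have hlog' : 1 < log (x + 1) := one_lt_log_of_three_le (by linarith)
  have h₁ : log (x + 1) - log x ≤ 1 / x := log_sub_log_le_div (by linarith) (by linarith) (by simp)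
  have h₂ : log (log (x + 1)) - log (log x) ≤ 1 / x / log x :=
    log_sub_log_le_div (by linarith) (by linarith) h₁
  have h₃ := log_sub_log_le_div (log_pos hlog) (log_pos hlog') h₂
  rwa [div_div, div_div, ← mul_assoc] at h₃

theorem not_summable_of_tendsto_atTop_of_sub_le {g c : ℕ → ℝ} (hg : Tendsto g atTop atTop)
    (hgc : ∀ᶠ k in atTop, g (k + 1) - g k ≤ c k) : ¬ Summable c := by
  intro hc
  obtain ⟨N, hN⟩ := eventually_atTop.1 hgc
  have hpartial : ∀ m ≥ N, g m - g N ≤ ∑ k ∈ Finset.range m, c k - ∑ k ∈ Finset.range N, c k := by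
    refine Nat.le_induction (by simp) fun m hm ih => ?_
    rw [Finset.sum_range_succ]
    linarith [hN m hm]
  have htop : Tendsto (fun m => ∑ k ∈ Finset.range m, c k) atTop atTop := by
    refine tendsto_atTop_mono' atTop ?_
      (tendsto_atTop_add_const_right atTop (∑ k ∈ Finset.range N, c k - g N) hg)
    filter_upwards [eventually_ge_atTop N] with m hm
    linarith [hpartial m hm]
  exact not_tendsto_atTop_of_tendsto_nhds hc.hasSum.tendsto_sum_nat htop

theorem not_summable_one_div_mul_log_mul_log_log :
    ¬ Summable fun k : ℕ => 1 / ((k : ℝ) * log k * log (log k)) := by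
  refine not_summable_of_tendsto_atTop_of_sub_le (g := fun k : ℕ => log (log (log k)))
    (tendsto_log_atTop.comp (tendsto_log_atTop.comp
      (tendsto_log_atTop.comp tendsto_natCast_atTop_atTop))) ?_
  filter_upwards [eventually_ge_atTop 3] with k hk
  push_cast
  exact log_log_log_succ_sub_le (by exact_mod_cast hk)

theorem liminf_mul_eq_zero_of_summable {a b : ℕ → ℝ} (ha : ∀ k, 0 ≤ a k) (hsum : Summable a)
    (hb : ∀ᶠ k in atTop, 0 < b k) (hdiv : ¬ Summable fun k => 1 / b k) :
    liminf (fun k => b k * a k) atTop = 0 := by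
  have hfreq : ∀ ε > 0, ∃ᶠ k in atTop, b k * a k ≤ ε := by
    intro ε hε
    by_contra! h
    refine hdiv ((hsum.mul_left ε⁻¹).of_norm_bounded_eventually_nat ?_)
    filter_upwards [h, hb] with k hk hbk
    rw [norm_of_nonneg (by positivity), one_div, inv_le_iff_one_le_mul₀' hbk]
    calc 1 = ε⁻¹ * ε := (inv_mul_cancel₀ hε.ne').symm
      _ ≤ ε⁻¹ * (b k * a k) := by gcongr
      _ = b k * (ε⁻¹ * a k) := by ring
  have hnonneg : ∀ᶠ k in atTop, 0 ≤ b k * a k := by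
    filter_upwards [hb] with k hk using mul_nonneg hk.le (ha k)
  refine le_antisymm (le_of_forall_pos_le_add fun ε hε => ?_)
    (le_liminf_of_le (IsCoboundedUnder.of_frequently_le (hfreq 1 one_pos)) hnonneg)
  rw [zero_add]
  exact liminf_le_of_frequently_le (hfreq ε hε) (isBoundedUnder_of_eventually_ge hnonneg)

theorem nsa_stmt_8_general (n : ℕ)
    (f : EuclideanSpace ℝ (Fin n) → ℝ)
    (hconv : ConvexOn ℝ Set.univ f)
    (hdiff : Differentiable ℝ f)
    (L : ℝ) (hL : 0 < L)
    (hlip : ∀ x x' : EuclideanSpace ℝ (Fin n),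
      ‖gradient f x - gradient f x'‖ ≤ L * ‖x - x'‖)
    (xstar : EuclideanSpace ℝ (Fin n)) (hmin : ∀ u, f xstar ≤ f u)
    (p : ℝ) (hp : 3 ≤ p)
    (η : ℝ) (hη0 : 0 < η) (hη : η ≤ 2 / (3 * L))
    (α : ℕ → ℝ) (hα : ∀ k : ℕ, α k = p / (k + p))
    (x y z : ℕ → EuclideanSpace ℝ (Fin n))
    (hy : ∀ k, y k = (1 - α k) • x k + α k • z k)
    (hx : ∀ k, x (k + 1) =
      if f (y k - η • gradient f (y k)) ≤ f (x k - η • gradient f (x k))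
      then y k - η • gradient f (y k)
      else x k - η • gradient f (x k))
    (hz : ∀ k, z (k + 1) = z k - (η / α k) • gradient f (y k))
    :
    Filter.liminf
      (fun k : ℕ =>
        (k : ℝ) ^ 3 * Real.log k * Real.log (Real.log k) * ‖gradient f (y k)‖ ^ 2)
      Filter.atTop = 0 := by
  have hLη : L * η ≤ 2 / 3 := by
    rw [le_div_iff₀ (by positivity)] at hη
    linarith
  have hdescent : ∀ k, f (x (k + 1)) ≤ f (y k - η • gradient f (y k)) := fun k => by
    rw [hx k]
    split_ifs with h
    exacts [le_rfl, (not_le.1 h).le]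
  have hsum := nsa_summable_sq_mul_norm_gradient_sq hconv hdiff hlip hmin (by linarith) hη0 hLη
    hα hy hdescent hz
  have hpos : ∀ᶠ k : ℕ in atTop, 0 < (k : ℝ) * log k * log (log k) := by
    filter_upwards [eventually_ge_atTop 3] with k hk
    have hlog := one_lt_log_of_three_le (x := k) (by exact_mod_cast hk)
    have := log_pos hlog
    positivity
  convert liminf_mul_eq_zero_of_summable (fun k => by positivity) hsum hpos
    not_summable_one_div_mul_log_mul_log_log using 2
  ext k
  ring

theorem nsa_stmt_8 (n : ℕ) (hn : 1 ≤ n)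
    (f : EuclideanSpace ℝ (Fin n) → ℝ)
    (hconv : ConvexOn ℝ Set.univ f)
    (hdiff : Differentiable ℝ f)
    (L : ℝ) (hL : 0 < L)
    (hlip : ∀ x x' : EuclideanSpace ℝ (Fin n),
      ‖gradient f x - gradient f x'‖ ≤ L * ‖x - x'‖)
    (xstar : EuclideanSpace ℝ (Fin n)) (hmin : ∀ u, f xstar ≤ f u)
    (p : ℝ) (hp : 3 ≤ p)
    (η : ℝ) (hη0 : 0 < η) (hη : η ≤ 2 / (3 * L))
    (α : ℕ → ℝ) (hα : ∀ k : ℕ, α k = p / (k + p))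
    (x y z : ℕ → EuclideanSpace ℝ (Fin n))
    (hx0 : x 0 = z 0)
    (hy : ∀ k, y k = (1 - α k) • x k + α k • z k)
    (hx : ∀ k, x (k + 1) =
      if f (y k - η • gradient f (y k)) ≤ f (x k - η • gradient f (x k))
      then y k - η • gradient f (y k)
      else x k - η • gradient f (x k))
    (hz : ∀ k, z (k + 1) = z k - (η / α k) • gradient f (y k))
    :
    Filter.liminf
      (fun k : ℕ =>
        (k : ℝ) ^ 3 * Real.log k * Real.log (Real.log k) * ‖gradient f (y k)‖ ^ 2)
      Filter.atTop = 0 :=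
  nsa_stmt_8_general n f hconv hdiff L hL hlip xstar hmin p hp η hη0 hη α hα x y z hy hx hz
end

section
/- Along the continuous-time NSA dynamics, for every 0 < t₀ ≤ t one has f(X(t)) − f* ≤ E(t₀)/t², where E(t₀) = (p²/2)·‖Z(t₀) − x*‖² + t₀²·(f(X(t₀)) − f*). In particular f(X(t)) − f* = O(1/t²) as t → ∞. -/
open scoped RealInnerProductSpace

/-!
The energy `E(t) = (p²/2)‖Z(t) - x*‖² + t²(f(X(t)) - f*)` is nonincreasing along the dynamics.
Substituting both equations, `E'(t) = -p t ⟪∇f(X), X - x*⟫ + 2t(f(X) - f*) - c t²‖∇f(X)‖²`,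
and the gradient inequality `f(X) - f* ≤ ⟪∇f(X), X - x*⟫` bounds this by
`-(p - 2) t (f(X) - f*) - c t²‖∇f(X)‖² ≤ 0`. Hence `t²(f(X(t)) - f*) ≤ E(t) ≤ E(t₀)`.
-/

theorem ConvexOn.add_fderiv_sub_le {E : Type*} [NormedAddCommGroup E] [NormedSpace ℝ E]
    {S : Set E} {f : E → ℝ} {f' : E →L[ℝ] ℝ} {x y : E}
    (hf : ConvexOn ℝ S f) (hx : x ∈ S) (hy : y ∈ S) (hf' : HasFDerivAt f f' x) :
    f x + f' (y - x) ≤ f y := by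
  let L : ℝ →ᵃ[ℝ] E := AffineMap.lineMap x y
  have hderiv : HasDerivAt (f ∘ L) (f' (y - x)) 0 :=
    (by simpa [L] using hf' : HasFDerivAt f f' (L 0)).comp_hasDerivAt (0 : ℝ)
      AffineMap.hasDerivAt_lineMap
  have hslope : slope (f ∘ L) 0 1 = f y - f x := by simp [slope, L]
  have := (hf.comp_affineMap L).le_slope_of_hasDerivAt (by simpa [L] using hx)
    (by simpa [L] using hy) one_pos hderiv
  linarith

section NSA

variable {E : Type*} [NormedAddCommGroup E] [InnerProductSpace ℝ E]

noncomputable def nsaEnergy (p : ℝ) (f : E → ℝ) (xstar : E) (X Z : ℝ → E) (t : ℝ) : ℝ :=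
  p ^ 2 / 2 * ‖Z t - xstar‖ ^ 2 + t ^ 2 * (f (X t) - f xstar)

theorem nsaEnergy_deriv_nonpos {p c t fx fstar : ℝ} {x z x' z' g xstar : E}
    (hp : 2 ≤ p) (hc : 0 ≤ c) (ht : 0 < t)
    (hode1 : t • x' + p • (x - z) + (c * t) • g = 0) (hode2 : z' + (t / p) • g = 0)
    (hgap : fx - fstar ≤ ⟪g, x - xstar⟫) (hmin : fstar ≤ fx) :
    p ^ 2 * ⟪z - xstar, z'⟫ + 2 * t * (fx - fstar) + t ^ 2 * ⟪g, x'⟫ ≤ 0 := by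
  have hinner1 : t * ⟪g, x'⟫ + p * ⟪g, x - z⟫ + c * t * ⟪g, g⟫ = 0 := by
    simpa [inner_add_right, real_inner_smul_right] using congrArg (⟪g, ·⟫) hode1
  have hinner2 : ⟪z - xstar, z'⟫ + t / p * ⟪z - xstar, g⟫ = 0 := by
    simpa [inner_add_right, real_inner_smul_right] using congrArg (⟪z - xstar, ·⟫) hode2
  have hpt : p ^ 2 * (t / p) = p * t := by field_simp
  have hsplit : ⟪g, x - xstar⟫ = ⟪g, x - z⟫ + ⟪z - xstar, g⟫ := by
    rw [real_inner_comm g (z - xstar), ← inner_add_right, sub_add_sub_cancel]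
  have hderiv : p ^ 2 * ⟪z - xstar, z'⟫ + 2 * t * (fx - fstar) + t ^ 2 * ⟪g, x'⟫
      = -(p * t) * ⟪g, x - xstar⟫ + 2 * t * (fx - fstar) - c * t ^ 2 * ⟪g, g⟫ := by
    rw [hsplit]
    linear_combination p ^ 2 * hinner2 - ⟪z - xstar, g⟫ * hpt + t * hinner1
  rw [hderiv]
  nlinarith [mul_le_mul_of_nonneg_left hgap (by positivity : 0 ≤ p * t),
    mul_nonneg (mul_nonneg (sub_nonneg.2 hp) ht.le) (sub_nonneg.2 hmin),
    mul_nonneg (mul_nonneg hc (sq_nonneg t)) (real_inner_self_nonneg (x := g))]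

variable [CompleteSpace E]

theorem hasDerivAt_nsaEnergy {p t : ℝ} {f : E → ℝ} {xstar g X' Z' : E} {X Z : ℝ → E}
    (hX : HasDerivAt X X' t) (hZ : HasDerivAt Z Z' t) (hf : HasGradientAt f g (X t)) :
    HasDerivAt (nsaEnergy p f xstar X Z)
      (p ^ 2 * ⟪Z t - xstar, Z'⟫ + 2 * t * (f (X t) - f xstar) + t ^ 2 * ⟪g, X'⟫) t := by
  have hfX : HasDerivAt (fun s => f (X s)) ⟪g, X'⟫ t := by
    simpa [InnerProductSpace.toDual_apply_apply, Function.comp_def] using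
      hf.hasFDerivAt.comp_hasDerivAt t hX
  exact (((hZ.sub_const xstar).norm_sq.const_mul (p ^ 2 / 2)).add
    ((hasDerivAt_pow 2 t).mul (hfX.sub_const (f xstar)))).congr_deriv (by ring)

theorem nsaEnergy_antitoneOn {p c : ℝ} {f : E → ℝ} {xstar : E} {X Z X' Z' : ℝ → E}
    (hconv : ConvexOn ℝ Set.univ f) (hdiff : Differentiable ℝ f) (hmin : ∀ u, f xstar ≤ f u)
    (hp : 2 ≤ p) (hc : 0 ≤ c)
    (hX : ∀ t : ℝ, 0 < t → HasDerivAt X (X' t) t)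
    (hZ : ∀ t : ℝ, 0 < t → HasDerivAt Z (Z' t) t)
    (hode1 : ∀ t : ℝ, 0 < t →
      t • X' t + p • (X t - Z t) + (c * t) • gradient f (X t) = 0)
    (hode2 : ∀ t : ℝ, 0 < t →
      Z' t + (t / p) • gradient f (X t) = 0) :
    AntitoneOn (nsaEnergy p f xstar X Z) (Set.Ioi 0) := by
  have hderiv (t : ℝ) (ht : 0 < t) := hasDerivAt_nsaEnergy (p := p) (xstar := xstar)
    (hX t ht) (hZ t ht) (hdiff (X t)).hasGradientAt
  have hgap (t : ℝ) : f (X t) - f xstar ≤ ⟪gradient f (X t), X t - xstar⟫ := by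
    have := hconv.add_fderiv_sub_le (Set.mem_univ _) (Set.mem_univ xstar)
      (hdiff (X t)).hasGradientAt.hasFDerivAt
    rw [InnerProductSpace.toDual_apply_apply, ← neg_sub, inner_neg_right] at this
    linarith
  refine antitoneOn_of_hasDerivWithinAt_nonpos (convex_Ioi 0)
    (fun t ht => (hderiv t ht).continuousAt.continuousWithinAt)
    (fun t ht => (hderiv t (by simpa using ht)).hasDerivWithinAt) fun t ht => ?_
  rw [interior_Ioi] at ht
  exact nsaEnergy_deriv_nonpos hp hc ht (hode1 t ht) (hode2 t ht) (hgap t) (hmin _)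

end NSA

theorem nsa_stmt_15_general (n : ℕ)
    (f : EuclideanSpace ℝ (Fin n) → ℝ)
    (hconv : ConvexOn ℝ Set.univ f)
    (hdiff : ContDiff ℝ 1 f)
    (xstar : EuclideanSpace ℝ (Fin n)) (hmin : ∀ u, f xstar ≤ f u)
    (p c : ℝ) (hp : 2 ≤ p) (hc : 0 < c)
    (X Z X' Z' : ℝ → EuclideanSpace ℝ (Fin n))
    (hX : ∀ t : ℝ, 0 < t → HasDerivAt X (X' t) t)
    (hZ : ∀ t : ℝ, 0 < t → HasDerivAt Z (Z' t) t)
    (hode1 : ∀ t : ℝ, 0 < t →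
      t • X' t + p • (X t - Z t) + (c * t) • gradient f (X t) = 0)
    (hode2 : ∀ t : ℝ, 0 < t →
      Z' t + (t / p) • gradient f (X t) = 0) :
    ∀ t₀ t : ℝ, 0 < t₀ → t₀ ≤ t →
      f (X t) - f xstar ≤
        (p ^ 2 / 2 * ‖Z t₀ - xstar‖ ^ 2 + t₀ ^ 2 * (f (X t₀) - f xstar)) / t ^ 2 := by
  intro t₀ t ht₀ ht₀t
  have hanti := nsaEnergy_antitoneOn hconv (hdiff.differentiable one_ne_zero) hmin hp hc.le
    hX hZ hode1 hode2
  have hdrop : t ^ 2 * (f (X t) - f xstar) ≤ nsaEnergy p f xstar X Z t :=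
    le_add_of_nonneg_left (by positivity)
  have ht : 0 < t := ht₀.trans_le ht₀t
  rw [le_div_iff₀ (by positivity), mul_comm]
  exact hdrop.trans (hanti ht₀ ht ht₀t)

/-- Along the continuous-time NSA dynamics, for `0 < t₀ ≤ t`,
`f(X(t)) - f* ≤ E(t₀) / t²` where
`E(t₀) = (p²/2)‖Z(t₀) - x*‖² + t₀²(f(X(t₀)) - f*)`. -/
theorem nsa_stmt_15 (n : ℕ) (hn : 1 ≤ n)
    (f : EuclideanSpace ℝ (Fin n) → ℝ)
    (hconv : ConvexOn ℝ Set.univ f)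
    (hdiff : ContDiff ℝ 1 f)
    (xstar : EuclideanSpace ℝ (Fin n)) (hmin : ∀ u, f xstar ≤ f u)
    (p c : ℝ) (hp : 2 ≤ p) (hc : 0 < c)
    (X Z X' Z' : ℝ → EuclideanSpace ℝ (Fin n))
    (hX : ∀ t : ℝ, 0 < t → HasDerivAt X (X' t) t)
    (hZ : ∀ t : ℝ, 0 < t → HasDerivAt Z (Z' t) t)
    (hode1 : ∀ t : ℝ, 0 < t →
      t • X' t + p • (X t - Z t) + (c * t) • gradient f (X t) = 0)
    (hode2 : ∀ t : ℝ, 0 < t →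
      Z' t + (t / p) • gradient f (X t) = 0) :
    ∀ t₀ t : ℝ, 0 < t₀ → t₀ ≤ t →
      f (X t) - f xstar ≤
        (p ^ 2 / 2 * ‖Z t₀ - xstar‖ ^ 2 + t₀ ^ 2 * (f (X t₀) - f xstar)) / t ^ 2 :=
  nsa_stmt_15_general n f hconv hdiff xstar hmin p c hp hc X Z X' Z' hX hZ hode1 hode2
end
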